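/- Let η ∈ (0,2), β ∈ [0, η), and let M be the Lévy measure of an η-stable distribution: M(A) = ∫_{S^{d-1}} ∫_0^∞ 1_A(ur) r^{-1-η} dr σ(du) for a finite nonzero Borel measure σ on S^{d-1}. Then M ∈ 𝔐^β and its β-inversion satisfies M^β(A) = ∫_{S^{d-1}} ∫_0^∞ 1_A(ur) r^{-1-(2+β-η)} dr σ(du); that is, M^β is the Lévy measure of a (2+β-η)-stable distribution with the same spectral measure σ. -/

import Mathlib

open MeasureTheory ENNReal Filter Topology Set

noncomputable section

abbrev Rd (d : ℕ) := EuclideanSpace ℝ (Fin d)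

/-- The spherical inversion map `x ↦ x / |x|²` (sending `0` to `0`). -/
def sphInv {d : ℕ} (x : Rd d) : Rd d := (‖x‖ ^ 2)⁻¹ • x

/-- The β-inversion of a measure `M`:
`M^β(A) = ∫ 1_A(x/|x|²) |x|^{2+β} M(dx)`. -/
def betaInv {d : ℕ} (β : ℝ) (M : Measure (Rd d)) : Measure (Rd d) :=
  Measure.map sphInv (M.withDensity fun x => ENNReal.ofReal (‖x‖ ^ (2 + β)))

/-- `M ∈ 𝔐^β`: `M({0}) = 0` and `∫ (|x|² ∧ |x|^β) M(dx) < ∞`. -/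
def MemM {d : ℕ} (β : ℝ) (M : Measure (Rd d)) : Prop :=
  M {0} = 0 ∧ ∫⁻ x, ENNReal.ofReal (min (‖x‖ ^ (2 : ℝ)) (‖x‖ ^ β)) ∂M < ⊤

/-- The value `∫_{S^{d-1}} ∫_0^∞ 1_A(r u) r^{-1-η} dr σ(du)` defining an
`η`-stable Lévy measure with spectral measure `σ`. -/
def stableVal {d : ℕ} (η : ℝ) (σ : Measure (Metric.sphere (0 : Rd d) 1))
    (A : Set (Rd d)) : ℝ≥0∞ :=
  ∫⁻ u, (∫⁻ r in Set.Ioi (0 : ℝ),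
    A.indicator (fun _ => (1 : ℝ≥0∞)) (r • (u : Rd d)) * ENNReal.ofReal (r ^ (-1 - η))
      ∂volume) ∂σ

/-!
Write `M` as the image of `σ ⊗ r^{-1-η} dr` under polar coordinates `(u, r) ↦ r u`. There the
inversion `x ↦ x/|x|²` becomes `r ↦ 1/r` and the weight `|x|^{2+β}` becomes `r^{2+β}`, so `M^β`
has radial part `r^{1+β-η} dr`, which the substitution `s = 1/r` turns into `s^{-1-(2+β-η)} ds`.
Membership in `𝔐^β` reduces to the finiteness of `∫_0^1 r^{1-η} dr` (as `η < 2`) and of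
`∫_1^∞ r^{β-1-η} dr` (as `β < η`).
-/

lemma lintegral_Ioi_comp_inv (g : ℝ → ℝ≥0∞) :
    ∫⁻ r in Ioi (0 : ℝ), g r = ∫⁻ r in Ioi (0 : ℝ), ENNReal.ofReal ((r ^ 2)⁻¹) * g r⁻¹ := by
  have h := lintegral_image_eq_lintegral_abs_det_fderiv_mul volume measurableSet_Ioi
    (f' := fun r : ℝ => (1 : ℝ →L[ℝ] ℝ).smulRight (-(r ^ 2)⁻¹))
    (fun r hr => (hasDerivAt_inv (ne_of_gt hr)).hasDerivWithinAt.hasFDerivWithinAt)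
    inv_injective.injOn g
  rw [show Inv.inv '' Ioi (0 : ℝ) = Ioi 0 by ext; simp] at h
  rw [h]
  refine setLIntegral_congr_fun measurableSet_Ioi fun r _ => ?_
  rw [ContinuousLinearMap.det_smulRight, one_apply_eq_self, one_mul, abs_neg,
    abs_of_nonneg (inv_nonneg.mpr (sq_nonneg r))]

lemma lintegral_Ioi_comp_inv_mul_rpow (g : ℝ → ℝ≥0∞) (a : ℝ) :
    ∫⁻ r in Ioi (0 : ℝ), g r⁻¹ * ENNReal.ofReal (r ^ a) =
      ∫⁻ r in Ioi (0 : ℝ), g r * ENNReal.ofReal (r ^ (-2 - a)) := by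
  rw [lintegral_Ioi_comp_inv fun r => g r * ENNReal.ofReal (r ^ (-2 - a))]
  refine setLIntegral_congr_fun measurableSet_Ioi fun r (hr : 0 < r) => ?_
  have hpow : (r ^ 2)⁻¹ * r⁻¹ ^ (-2 - a) = r ^ a := by
    rw [← Real.rpow_natCast r 2, ← Real.rpow_neg hr.le, Real.inv_rpow hr.le,
      ← Real.rpow_neg hr.le, ← Real.rpow_add hr]
    norm_num
  rw [mul_left_comm, ← ENNReal.ofReal_mul (inv_nonneg.mpr (sq_nonneg r)), hpow]

lemma lintegral_Ioi_min_rpow_mul_rpow_lt_top {β η : ℝ} (hη : η < 2) (hβη : β < η) :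
    ∫⁻ r in Ioi (0 : ℝ),
      ENNReal.ofReal (min (r ^ (2 : ℝ)) (r ^ β)) * ENNReal.ofReal (r ^ (-1 - η)) < ⊤ := by
  have hle : ∀ {r s : ℝ}, 0 < r → min (r ^ (2 : ℝ)) (r ^ β) ≤ r ^ s →
      ENNReal.ofReal (min (r ^ (2 : ℝ)) (r ^ β)) * ENNReal.ofReal (r ^ (-1 - η)) ≤
        ENNReal.ofReal (r ^ (s - 1 - η)) := by
    intro r s hr hs
    rw [← ENNReal.ofReal_mul (by positivity)]
    refine ENNReal.ofReal_le_ofReal ?_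
    calc _ ≤ r ^ s * r ^ (-1 - η) := by gcongr
      _ = r ^ (s - 1 - η) := by rw [← Real.rpow_add hr]; ring_nf
  rw [← Ioc_union_Ioi_eq_Ioi zero_le_one,
    lintegral_union measurableSet_Ioi (Ioc_disjoint_Ioi le_rfl)]
  refine ENNReal.add_lt_top.mpr ⟨?_, ?_⟩
  · have hint : IntegrableOn (fun r : ℝ => r ^ ((2 : ℝ) - 1 - η)) (Ioc 0 1) := by
      have := intervalIntegral.intervalIntegrable_rpow' (a := 0) (b := 1)
        (by linarith : (-1 : ℝ) < 2 - 1 - η)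
      rwa [intervalIntegrable_iff, uIoc_of_le zero_le_one] at this
    exact (setLIntegral_mono (by fun_prop) fun r hr => hle hr.1 (min_le_left _ _)).trans_lt
      hint.lintegral_lt_top
  · have hint : IntegrableOn (fun r : ℝ => r ^ (β - 1 - η)) (Ioi 1) :=
      (integrableOn_Ioi_rpow_iff one_pos).mpr (by linarith)
    exact (setLIntegral_mono (by fun_prop) fun r (hr : 1 < r) =>
      hle (one_pos.trans hr) (min_le_right _ _)).trans_lt hint.lintegral_lt_top

lemma norm_smul_coe_sphere {E : Type*} [NormedAddCommGroup E] [NormedSpace ℝ E]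
    (u : Metric.sphere (0 : E) 1) (r : ℝ) : ‖r • (u : E)‖ = |r| := by
  rw [norm_smul, norm_eq_of_mem_sphere, mul_one, Real.norm_eq_abs]

section Polar

variable {d : ℕ}

@[fun_prop]
lemma measurable_sphInv : Measurable (sphInv (d := d)) :=
  ((measurable_norm.pow_const 2).inv).smul measurable_id

lemma sphInv_smul_coe_sphere (u : Metric.sphere (0 : Rd d) 1) {r : ℝ} (hr : 0 < r) :
    sphInv (r • (u : Rd d)) = r⁻¹ • (u : Rd d) := by
  rw [sphInv, norm_smul_coe_sphere, abs_of_pos hr, smul_smul]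
  field_simp

lemma lintegral_betaInv (β : ℝ) (M : Measure (Rd d)) {f : Rd d → ℝ≥0∞} (hf : Measurable f) :
    ∫⁻ x, f x ∂betaInv β M = ∫⁻ x, ENNReal.ofReal (‖x‖ ^ (2 + β)) * f (sphInv x) ∂M := by
  rw [betaInv, lintegral_map hf measurable_sphInv]
  exact lintegral_withDensity_eq_lintegral_mul _ (by fun_prop) (hf.comp measurable_sphInv)

def stableMeasure (η : ℝ) (σ : Measure (Metric.sphere (0 : Rd d) 1)) : Measure (Rd d) :=
  (σ.prod ((volume.restrict (Ioi 0)).withDensity fun r => ENNReal.ofReal (r ^ (-1 - η)))).map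
    fun p => p.2 • (p.1 : Rd d)

variable (η : ℝ) (σ : Measure (Metric.sphere (0 : Rd d) 1))

lemma lintegral_stableMeasure {f : Rd d → ℝ≥0∞} (hf : Measurable f) :
    ∫⁻ x, f x ∂stableMeasure η σ =
      ∫⁻ u, (∫⁻ r in Ioi (0 : ℝ), f (r • (u : Rd d)) * ENNReal.ofReal (r ^ (-1 - η))) ∂σ := by
  have hpolar : Measurable fun p : Metric.sphere (0 : Rd d) 1 × ℝ => p.2 • (p.1 : Rd d) := by
    fun_prop
  rw [stableMeasure, lintegral_map hf hpolar,
    lintegral_prod (fun p : Metric.sphere (0 : Rd d) 1 × ℝ => f (p.2 • (p.1 : Rd d)))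
      (hf.comp hpolar).aemeasurable]
  refine lintegral_congr fun u => ?_
  rw [lintegral_withDensity_eq_lintegral_mul _ (by fun_prop) (by fun_prop)]
  exact lintegral_congr fun r => mul_comm _ _

lemma stableMeasure_apply {A : Set (Rd d)} (hA : MeasurableSet A) :
    stableMeasure η σ A = stableVal η σ A := by
  rw [← lintegral_indicator_one hA, lintegral_stableMeasure η σ (measurable_one.indicator hA)]
  rfl

lemma stableMeasure_singleton_zero : stableMeasure η σ {0} = 0 := by
  rw [← lintegral_indicator_one (measurableSet_singleton 0),
    lintegral_stableMeasure η σ (measurable_one.indicator (measurableSet_singleton 0))]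
  refine (lintegral_congr fun u => ?_).trans lintegral_zero
  refine (setLIntegral_congr_fun measurableSet_Ioi fun r (hr : 0 < r) => ?_).trans lintegral_zero
  have hne : r • (u : Rd d) ∉ ({0} : Set (Rd d)) :=
    mem_singleton_iff.not.mpr (norm_pos_iff.mp (by rwa [norm_smul_coe_sphere, abs_of_pos hr]))
  rw [indicator_of_notMem hne, zero_mul]

lemma lintegral_comp_norm_stableMeasure {g : ℝ → ℝ≥0∞} (hg : Measurable g) :
    ∫⁻ x, g ‖x‖ ∂stableMeasure η σ =
      σ univ * ∫⁻ r in Ioi (0 : ℝ), g r * ENNReal.ofReal (r ^ (-1 - η)) := by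
  rw [lintegral_stableMeasure η σ (by fun_prop : Measurable fun x : Rd d => g ‖x‖),
    mul_comm, ← lintegral_const]
  refine lintegral_congr fun u => setLIntegral_congr_fun measurableSet_Ioi fun r (hr : 0 < r) => ?_
  rw [norm_smul_coe_sphere, abs_of_pos hr]

lemma memM_stableMeasure [IsFiniteMeasure σ] {β : ℝ} (hη : η < 2) (hβη : β < η) :
    MemM β (stableMeasure η σ) :=
  ⟨stableMeasure_singleton_zero η σ, by
    rw [lintegral_comp_norm_stableMeasure η σ
      (g := fun r => ENNReal.ofReal (min (r ^ (2 : ℝ)) (r ^ β))) (by fun_prop)]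
    exact ENNReal.mul_lt_top (measure_lt_top σ _)
      (lintegral_Ioi_min_rpow_mul_rpow_lt_top hη hβη)⟩

lemma betaInv_stableMeasure (β : ℝ) :
    betaInv β (stableMeasure η σ) = stableMeasure (2 + β - η) σ := by
  refine Measure.ext_of_lintegral _ fun f hf => ?_
  rw [lintegral_betaInv β _ hf, lintegral_stableMeasure η σ (by fun_prop),
    lintegral_stableMeasure _ σ hf]
  refine lintegral_congr fun u => ?_
  calc ∫⁻ r in Ioi (0 : ℝ), ENNReal.ofReal (‖r • (u : Rd d)‖ ^ (2 + β)) *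
          f (sphInv (r • (u : Rd d))) * ENNReal.ofReal (r ^ (-1 - η))
      = ∫⁻ r in Ioi (0 : ℝ), f (r⁻¹ • (u : Rd d)) * ENNReal.ofReal (r ^ (1 + β - η)) := by
        refine setLIntegral_congr_fun measurableSet_Ioi fun r (hr : 0 < r) => ?_
        rw [sphInv_smul_coe_sphere u hr, norm_smul_coe_sphere, abs_of_pos hr, mul_comm _ (f _),
          mul_assoc, ← ENNReal.ofReal_mul (by positivity), ← Real.rpow_add hr]
        ring_nf
    _ = _ := by
        rw [lintegral_Ioi_comp_inv_mul_rpow (fun r => f (r • (u : Rd d)))]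
        ring_nf

end Polar

theorem stmt11_general {d : ℕ} (η β : ℝ) (hη : η ∈ Set.Ioo (0 : ℝ) 2)
    (hβ : β ∈ Set.Ico (0 : ℝ) η)
    (σ : Measure (Metric.sphere (0 : Rd d) 1)) [IsFiniteMeasure σ]
    (M : Measure (Rd d))
    (hM : ∀ A : Set (Rd d), MeasurableSet A → M A = stableVal η σ A) :
    MemM β M ∧
      ∀ A : Set (Rd d), MeasurableSet A →
        betaInv β M A = stableVal (2 + β - η) σ A := by
  obtain rfl : M = stableMeasure η σ :=
    Measure.ext fun A hA => (hM A hA).trans (stableMeasure_apply η σ hA).symm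
  refine ⟨memM_stableMeasure η σ hη.2 hβ.2, fun A hA => ?_⟩
  rw [betaInv_stableMeasure, stableMeasure_apply _ σ hA]

theorem stmt11 {d : ℕ} (η β : ℝ) (hη : η ∈ Set.Ioo (0 : ℝ) 2)
    (hβ : β ∈ Set.Ico (0 : ℝ) η)
    (σ : Measure (Metric.sphere (0 : Rd d) 1)) [IsFiniteMeasure σ] (hσ : σ ≠ 0)
    (M : Measure (Rd d))
    (hM : ∀ A : Set (Rd d), MeasurableSet A → M A = stableVal η σ A) :
    MemM β M ∧
      ∀ A : Set (Rd d), MeasurableSet A →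
        betaInv β M A = stableVal (2 + β - η) σ A :=
  stmt11_general η β hη hβ σ M hM
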